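/- The Left Reduction algorithm reduces any resolved binary tree of length n to a left-reduced resolved binary tree using a sequence of at most (5n-1)(n-2)/2 primitive arrows; in particular the number of arrows used is O(n^2). -/

import Mathlib

/-- A planar binary tree in which every node (leaf or internal) carries a level. -/
inductive RTree : Type
  | leaf (lvl : ℕ) : RTree
  | node (lvl : ℕ) (l r : RTree) : RTree

namespace RTree

/-- Left-to-right sequence of the levels of all nodes (infix traversal). -/
def seq : RTree → List ℕ
  | leaf k => [k]
  | node k l r => seq l ++ k :: seq r

/-- Left-to-right sequence of the levels of the internal (branch) nodes. -/
def branchSeq : RTree → List ℕ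
  | leaf _ => []
  | node k l r => branchSeq l ++ k :: branchSeq r

/-- Left-to-right sequence of the leaf levels. -/
def leafSeq : RTree → List ℕ
  | leaf k => [k]
  | node _ l r => leafSeq l ++ leafSeq r

/-- Number of leaves. -/
def leafCount : RTree → ℕ
  | leaf _ => 1
  | node _ l r => leafCount l + leafCount r

/-- Every node lies at a strictly lower level than all nodes of its subtrees. -/
def LevelValid : RTree → Prop
  | leaf _ => True
  | node k l r => (∀ m ∈ seq l, k < m) ∧ (∀ m ∈ seq r, k < m) ∧ LevelValid l ∧ LevelValid r

/-- A resolved binary tree (RB tree) of length `n`: `n` leaves, the `2n - 1`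
nodes carry the distinct levels `0, …, 2n - 2` (so the root is at level `0`),
and every internal node lies below both of its children. -/
def IsRB (n : ℕ) (t : RTree) : Prop :=
  leafCount t = n ∧ (seq t).Perm (List.range (2 * n - 1)) ∧ LevelValid t

/-- The level of the root of a tree. -/
def rootLvl : RTree → ℕ
  | leaf k => k
  | node k _ _ => k

/-- Replace the level of the root. -/
def setLvl (m : ℕ) : RTree → RTree
  | leaf _ => leaf m
  | node _ l r => node m l r

/-- Primitive moves on RB trees: reattachment of an edge about a pivot
(associativity, both directions) and interchange of the levels of the two
children of a common internal node, applied anywhere in the tree. -/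
inductive Move : RTree → RTree → Prop
  | assoc (k l : ℕ) (A B C : RTree) :
      Move (node k (node l A B) C) (node k A (node l B C))
  | assocInv (k l : ℕ) (A B C : RTree) :
      Move (node k A (node l B C)) (node k (node l A B) C)
  | interchange (k : ℕ) (x y : RTree) :
      Move (node k x y) (node k (setLvl (rootLvl y) x) (setLvl (rootLvl x) y))
  | congrL (k : ℕ) {l l' : RTree} (r : RTree) : Move l l' → Move (node k l r) (node k l' r)
  | congrR (k : ℕ) (l : RTree) {r r' : RTree} : Move r r' → Move (node k l r) (node k l r')

/-- A primitive arrow of the groupoid `RBTree`. -/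
def MoveRB (n : ℕ) (s t : RTree) : Prop := Move s t ∧ IsRB n s ∧ IsRB n t

end RTree

/-- A left-reduced RB tree of length `n`: all branch levels lie below all leaf
levels and the underlying IRB (branch) structure is the descending comb
`(n-2)(n-3)⋯210`. -/
def LeftReduced (n : ℕ) (t : RTree) : Prop :=
  RTree.IsRB n t ∧ RTree.branchSeq t = (List.range (n - 1)).reverse


namespace RTree

@[simp] lemma seq_leaf (k : ℕ) : seq (leaf k) = [k] := rfl
@[simp] lemma seq_node (k : ℕ) (l r : RTree) : seq (node k l r) = seq l ++ k :: seq r := rfl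
@[simp] lemma branchSeq_leaf (k : ℕ) : branchSeq (leaf k) = [] := rfl
@[simp] lemma branchSeq_node (k : ℕ) (l r : RTree) :
    branchSeq (node k l r) = branchSeq l ++ k :: branchSeq r := rfl
@[simp] lemma leafCount_leaf (k : ℕ) : leafCount (leaf k) = 1 := rfl
@[simp] lemma leafCount_node (k : ℕ) (l r : RTree) :
    leafCount (node k l r) = leafCount l + leafCount r := rfl
@[simp] lemma rootLvl_leaf (k : ℕ) : rootLvl (leaf k) = k := rfl
@[simp] lemma rootLvl_node (k : ℕ) (l r : RTree) : rootLvl (node k l r) = k := rfl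
@[simp] lemma setLvl_leaf (m k : ℕ) : setLvl m (leaf k) = leaf m := rfl
@[simp] lemma setLvl_node (m k : ℕ) (l r : RTree) : setLvl m (node k l r) = node m l r := rfl

/-- `k` is strictly below every level of `t`. -/
def Below (k : ℕ) (t : RTree) : Prop := ∀ m ∈ seq t, k < m

@[simp] lemma below_leaf {k a : ℕ} : Below k (leaf a) ↔ k < a := by
  simp [Below]

@[simp] lemma below_node {k j : ℕ} {l r : RTree} :
    Below k (node j l r) ↔ k < j ∧ Below k l ∧ Below k r := by
  constructor
  · intro h
    refine ⟨h j (by simp), fun m hm => h m (by simp [hm]), fun m hm => h m (by simp [hm])⟩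
  · rintro ⟨h1, h2, h3⟩ m hm
    simp only [seq_node, List.mem_append, List.mem_cons] at hm
    rcases hm with h | h | h
    · exact h2 m h
    · exact h ▸ h1
    · exact h3 m h

@[simp] lemma levelValid_leaf (k : ℕ) : LevelValid (leaf k) := trivial

@[simp] lemma levelValid_node {k : ℕ} {l r : RTree} :
    LevelValid (node k l r) ↔ Below k l ∧ Below k r ∧ LevelValid l ∧ LevelValid r :=
  Iff.rfl

lemma seq_ne_nil (t : RTree) : seq t ≠ [] := by
  cases t <;> simp

lemma rootLvl_mem (t : RTree) : rootLvl t ∈ seq t := by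
  cases t <;> simp

lemma LevelValid.root_le {t : RTree} (h : LevelValid t) : ∀ m ∈ seq t, rootLvl t ≤ m := by
  induction t with
  | leaf k => simp
  | node k l r ihl ihr =>
    rcases h with ⟨h1, h2, _, _⟩
    intro m hm
    simp only [seq_node, List.mem_append, List.mem_cons] at hm
    simp only [rootLvl_node]
    rcases hm with h | h | h
    · exact le_of_lt (h1 m h)
    · omega
    · exact le_of_lt (h2 m h)

lemma Below.of_perm {k : ℕ} {t t' : RTree} (h : Below k t) (hp : (seq t).Perm (seq t')) :
    Below k t' := fun m hm => h m (hp.symm.subset hm)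

lemma below_of_lt_rootLvl {k : ℕ} {t : RTree} (h : LevelValid t) (hk : k < rootLvl t) :
    Below k t := fun m hm => lt_of_lt_of_le hk (h.root_le m hm)

lemma seq_setLvl_decomp (t : RTree) :
    ∃ u v : List ℕ, seq t = u ++ rootLvl t :: v ∧ ∀ m, seq (setLvl m t) = u ++ m :: v := by
  cases t with
  | leaf k => exact ⟨[], [], rfl, fun m => rfl⟩
  | node k l r => exact ⟨seq l, seq r, rfl, fun m => rfl⟩

lemma Move.perm {s t : RTree} (h : Move s t) : (seq s).Perm (seq t) := by
  induction h with
  | assoc k l A B C =>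
    rw [← Multiset.coe_eq_coe]
    simp only [seq_node]
    simp only [← Multiset.cons_coe, ← Multiset.coe_add]
    simp [Multiset.singleton_add, ← Multiset.singleton_add]
    abel
  | assocInv k l A B C =>
    rw [← Multiset.coe_eq_coe]
    simp only [seq_node]
    simp only [← Multiset.cons_coe, ← Multiset.coe_add]
    simp [Multiset.singleton_add, ← Multiset.singleton_add]
    abel
  | interchange k x y =>
    obtain ⟨u, v, hx, hx'⟩ := seq_setLvl_decomp x
    obtain ⟨u', v', hy, hy'⟩ := seq_setLvl_decomp y
    rw [← Multiset.coe_eq_coe]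
    simp only [seq_node, hx, hy, hx' (rootLvl y), hy' (rootLvl x)]
    simp only [← Multiset.cons_coe, ← Multiset.coe_add]
    simp [Multiset.singleton_add, ← Multiset.singleton_add]
    abel
  | congrL k r h ih =>
    simp only [seq_node]
    exact List.Perm.append ih (List.Perm.refl _)
  | congrR k l h ih =>
    simp only [seq_node]
    exact List.Perm.append (List.Perm.refl _) (ih.cons k)

lemma leafCount_setLvl (m : ℕ) (t : RTree) : leafCount (setLvl m t) = leafCount t := by
  cases t <;> simp

lemma Move.leafCount_eq {s t : RTree} (h : Move s t) : leafCount s = leafCount t := by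
  induction h with
  | assoc k l A B C => simp [Nat.add_assoc]
  | assocInv k l A B C => simp [Nat.add_assoc]
  | interchange k x y => simp [leafCount_setLvl]
  | congrL k r h ih => simp [ih]
  | congrR k l h ih => simp [ih]

/-- `Path m s t`: `t` is reachable from `s` by at most `m` moves, all intermediate
trees (including the endpoints) being level-valid. -/
inductive Path : ℕ → RTree → RTree → Prop
  | refl (m : ℕ) (t : RTree) : LevelValid t → Path m t t
  | cons {m : ℕ} {s u t : RTree} : LevelValid s → Move s u → Path m u t → Path (m + 1) s t

lemma Path.validL {m : ℕ} {s t : RTree} (h : Path m s t) : LevelValid s := by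
  cases h with
  | refl m t h => exact h
  | cons h _ _ => exact h

lemma Path.validR {m : ℕ} {s t : RTree} (h : Path m s t) : LevelValid t := by
  induction h with
  | refl m t h => exact h
  | cons h hm hp ih => exact ih

lemma Path.perm {m : ℕ} {s t : RTree} (h : Path m s t) : (seq s).Perm (seq t) := by
  induction h with
  | refl m t h => exact List.Perm.refl _
  | cons h hm hp ih => exact hm.perm.trans ih

lemma Path.leafCount_eq {m : ℕ} {s t : RTree} (h : Path m s t) : leafCount s = leafCount t := by
  induction h with
  | refl m t h => rfl
  | cons h hm hp ih => exact hm.leafCount_eq.trans ih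

lemma Path.add_right {m : ℕ} {s t : RTree} (h : Path m s t) (k : ℕ) : Path (m + k) s t := by
  induction h with
  | refl m t h => exact Path.refl _ _ h
  | cons h hm hp ih => exact Nat.succ_add _ _ ▸ Path.cons h hm ih

lemma Path.mono {m m' : ℕ} {s t : RTree} (h : Path m s t) (hle : m ≤ m') : Path m' s t := by
  obtain ⟨k, rfl⟩ := Nat.exists_eq_add_of_le hle
  exact h.add_right k

lemma Path.trans {a b : ℕ} {s t u : RTree} (h1 : Path a s t) (h2 : Path b t u) :
    Path (a + b) s u := by
  induction h1 with
  | refl m t h => exact h2.mono (Nat.le_add_left _ _)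
  | cons h hm hp ih => exact Nat.succ_add _ _ ▸ Path.cons h hm (ih h2)

lemma Path.single {s t : RTree} (hs : LevelValid s) (ht : LevelValid t) (h : Move s t) :
    Path 1 s t :=
  Path.cons hs h (Path.refl 0 t ht)

lemma Path.congrL {m : ℕ} {l l' : RTree} (h : Path m l l') (k : ℕ) (r : RTree)
    (hv : LevelValid (node k l r)) : Path m (node k l r) (node k l' r) := by
  induction h generalizing r with
  | refl m t h => exact Path.refl _ _ hv
  | @cons m s u t h hm hp ih =>
    rcases levelValid_node.mp hv with ⟨h1, h2, _, h4⟩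
    have hv' : LevelValid (node k u r) :=
      levelValid_node.mpr ⟨h1.of_perm hm.perm, h2, hp.validL, h4⟩
    exact Path.cons hv (Move.congrL k r hm) (ih r hv')

lemma Path.congrR {m : ℕ} {r r' : RTree} (h : Path m r r') (k : ℕ) (l : RTree)
    (hv : LevelValid (node k l r)) : Path m (node k l r) (node k l r') := by
  induction h generalizing l with
  | refl m t h => exact Path.refl _ _ hv
  | @cons m s u t h hm hp ih =>
    rcases levelValid_node.mp hv with ⟨h1, h2, h3, _⟩
    have hv' : LevelValid (node k l u) :=
      levelValid_node.mpr ⟨h1, h2.of_perm hm.perm, h3, hp.validL⟩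
    exact Path.cons hv (Move.congrR k l hm) (ih l hv')

/-- Number of internal nodes. -/
def branches : RTree → ℕ
  | leaf _ => 0
  | node _ l r => branches l + branches r + 1

@[simp] lemma branches_leaf (k : ℕ) : branches (leaf k) = 0 := rfl
@[simp] lemma branches_node (k : ℕ) (l r : RTree) :
    branches (node k l r) = branches l + branches r + 1 := rfl

lemma leafCount_eq_branches_add_one (t : RTree) : leafCount t = branches t + 1 := by
  induction t with
  | leaf k => rfl
  | node k l r ihl ihr => simp [ihl, ihr]; omega

lemma nodup_left {k : ℕ} {A B : RTree} (h : (seq (node k A B)).Nodup) : (seq A).Nodup :=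
  h.sublist (by simpa using List.sublist_append_left (seq A) (k :: seq B))

lemma nodup_right {k : ℕ} {A B : RTree} (h : (seq (node k A B)).Nodup) : (seq B).Nodup := by
  have h2 : (k :: seq B).Sublist (seq (node k A B)) := by
    simpa using List.sublist_append_right (seq A) (k :: seq B)
  exact ((List.sublist_cons_self _ _).trans h2).nodup h

lemma nodup_ne {k : ℕ} {A B : RTree} (h : (seq (node k A B)).Nodup) :
    ∀ a ∈ seq A, ∀ b ∈ seq B, a ≠ b := by
  simp only [seq_node] at h
  have hd := (List.nodup_append'.mp h).2.2
  intro a ha b hb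
  exact fun hab => hd ha (by simp [hab, hb])

lemma nodup_root_ne {k : ℕ} {A B : RTree} (h : (seq (node k A B)).Nodup) :
    ∀ b ∈ seq B, k ≠ b := by
  simp only [seq_node] at h
  have := (List.nodup_append'.mp h).2.1
  intro b hb
  exact fun hkb => (List.nodup_cons.mp this).1 (hkb ▸ hb)

/-- Pull the top-right leaf `c` of the right child up to become the right child
of the root, in at most `2·(branches A) + 2` moves. -/
lemma pull (A : RTree) : ∀ (k l c : ℕ) (B' : RTree),
    LevelValid (node k A (node l B' (leaf c))) →
    (seq (node k A (node l B' (leaf c)))).Nodup →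
    ∃ Z, Path (2 * branches A + 2) (node k A (node l B' (leaf c))) (node k Z (leaf c)) := by
  induction A with
  | leaf a =>
    intro k l c B' hv hnd
    obtain ⟨hkA, ⟨hkl, hkB, hkc⟩, -, hlB, hlc, hB, -⟩ :
        Below k (leaf a) ∧ (k < l ∧ Below k B' ∧ k < c) ∧ LevelValid (leaf a) ∧
          Below l B' ∧ l < c ∧ LevelValid B' ∧ True := by
      simpa using hv
    have hka : k < a := by simpa using hkA
    have hal : a ≠ l := nodup_ne hnd a (by simp) l (by simp)
    rcases lt_or_gt_of_ne hal with hal | hla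
    · -- a < l : interchange then assocInv
      have hv1 : LevelValid (node k (leaf l) (node a B' (leaf c))) := by
        refine levelValid_node.mpr ⟨by simpa using hkl, ?_, by simp, ?_⟩
        · exact below_node.mpr ⟨hka, hkB, by simpa using hkc⟩
        · exact levelValid_node.mpr ⟨fun m hm => lt_trans hal (hlB m hm),
            by simp [lt_trans hal hlc], hB, trivial⟩
      have mv1 : Move (node k (leaf a) (node l B' (leaf c))) (node k (leaf l) (node a B' (leaf c))) := by
        simpa using Move.interchange k (leaf a) (node l B' (leaf c))
      have hv2 : LevelValid (node k (node a (leaf l) B') (leaf c)) := by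
        refine levelValid_node.mpr ⟨?_, by simpa using hkc, ?_, by simp⟩
        · exact below_node.mpr ⟨hka, by simpa using hkl, hkB⟩
        · exact levelValid_node.mpr ⟨by simpa using hal,
            fun m hm => lt_trans hal (hlB m hm), by simp, hB⟩
      have mv2 : Move (node k (leaf l) (node a B' (leaf c))) (node k (node a (leaf l) B') (leaf c)) :=
        Move.assocInv k a (leaf l) B' (leaf c)
      exact ⟨node a (leaf l) B',
        Path.cons hv mv1 (Path.cons hv1 mv2 (Path.refl 0 _ hv2))⟩
    · -- l < a : single assocInv
      have hv1 : LevelValid (node k (node l (leaf a) B') (leaf c)) := by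
        refine levelValid_node.mpr ⟨?_, by simpa using hkc, ?_, by simp⟩
        · exact below_node.mpr ⟨hkl, hkA, hkB⟩
        · exact levelValid_node.mpr ⟨by simpa using hla, hlB, by simp, hB⟩
      have mv1 : Move (node k (leaf a) (node l B' (leaf c))) (node k (node l (leaf a) B') (leaf c)) :=
        Move.assocInv k l (leaf a) B' (leaf c)
      exact ⟨node l (leaf a) B', (Path.single hv hv1 mv1).mono (by omega)⟩
  | node a A1 A2 ih1 ih2 =>
    intro k l c B' hv hnd
    obtain ⟨hkA, ⟨hkl, hkB, hkc⟩, hA, hlB, hlc, hB, -⟩ :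
        Below k (node a A1 A2) ∧ (k < l ∧ Below k B' ∧ k < c) ∧ LevelValid (node a A1 A2) ∧
          Below l B' ∧ l < c ∧ LevelValid B' ∧ True := by
      simpa using hv
    obtain ⟨hka, hkA1, hkA2⟩ := below_node.mp hkA
    obtain ⟨haA1, haA2, hA1, hA2⟩ := levelValid_node.mp hA
    have hal : a ≠ l := nodup_ne hnd a (by simp) l (by simp)
    rcases lt_or_gt_of_ne hal with hal | hla
    · -- a < l : assoc, recurse on A2, assocInv
      have halB : Below a B' := fun m hm => lt_trans hal (hlB m hm)
      have halc : a < c := lt_trans hal hlc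
      have hvY : LevelValid (node a A2 (node l B' (leaf c))) :=
        levelValid_node.mpr ⟨haA2, below_node.mpr ⟨hal, halB, by simpa using halc⟩, hA2,
          levelValid_node.mpr ⟨hlB, by simpa using hlc, hB, trivial⟩⟩
      have hv1 : LevelValid (node k A1 (node a A2 (node l B' (leaf c)))) :=
        levelValid_node.mpr ⟨hkA1,
          below_node.mpr ⟨hka, hkA2, below_node.mpr ⟨hkl, hkB, by simpa using hkc⟩⟩, hA1, hvY⟩
      have mv1 : Move (node k (node a A1 A2) (node l B' (leaf c)))
          (node k A1 (node a A2 (node l B' (leaf c)))) :=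
        Move.assoc k a A1 A2 (node l B' (leaf c))
      have hnd1 : (seq (node k A1 (node a A2 (node l B' (leaf c))))).Nodup :=
        (mv1.perm.nodup_iff).mp hnd
      obtain ⟨Z2, path2⟩ := ih2 a l c B' hvY (nodup_right hnd1)
      have lifted : Path (2 * branches A2 + 2) (node k A1 (node a A2 (node l B' (leaf c))))
          (node k A1 (node a Z2 (leaf c))) := path2.congrR k A1 hv1
      have hvmid : LevelValid (node k A1 (node a Z2 (leaf c))) := lifted.validR
      obtain ⟨hkA1', hkY', hA1', hvZ⟩ := levelValid_node.mp hvmid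
      obtain ⟨haZ2, hac', hZ2, -⟩ := levelValid_node.mp hvZ
      obtain ⟨hka', hkZ2, hkc'⟩ := below_node.mp hkY'
      have hv2 : LevelValid (node k (node a A1 Z2) (leaf c)) :=
        levelValid_node.mpr ⟨below_node.mpr ⟨hka, hkA1, hkZ2⟩, hkc', 
          levelValid_node.mpr ⟨haA1, haZ2, hA1, hZ2⟩, trivial⟩
      have mv2 : Move (node k A1 (node a Z2 (leaf c))) (node k (node a A1 Z2) (leaf c)) :=
        Move.assocInv k a A1 Z2 (leaf c)
      refine ⟨node a A1 Z2, ?_⟩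
      have pt : Path (2 * branches A2 + 2 + 1 + 1) (node k (node a A1 A2) (node l B' (leaf c)))
          (node k (node a A1 Z2) (leaf c)) := by
        have := Path.cons hv mv1 (lifted.trans (Path.single hvmid hv2 mv2))
        exact this
      exact pt.mono (by simp; omega)
    · -- l < a : single assocInv
      have hlA : Below l (node a A1 A2) := below_of_lt_rootLvl hA (by simpa using hla)
      have hv1 : LevelValid (node k (node l (node a A1 A2) B') (leaf c)) :=
        levelValid_node.mpr ⟨below_node.mpr ⟨hkl, hkA, hkB⟩, by simpa using hkc,
          levelValid_node.mpr ⟨hlA, hlB, hA, hB⟩, trivial⟩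
      have mv1 : Move (node k (node a A1 A2) (node l B' (leaf c)))
          (node k (node l (node a A1 A2) B') (leaf c)) :=
        Move.assocInv k l (node a A1 A2) B' (leaf c)
      exact ⟨node l (node a A1 A2) B', (Path.single hv hv1 mv1).mono (by omega)⟩

/-- Make the right child of the root a leaf, in at most `2·branches` moves. -/
lemma rightLeaf (B : RTree) : ∀ (k : ℕ) (A : RTree),
    LevelValid (node k A B) → (seq (node k A B)).Nodup →
    ∃ Z m, Path (2 * branches (node k A B)) (node k A B) (node k Z (leaf m)) := by
  induction B with
  | leaf m =>
    intro k A hv hnd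
    exact ⟨A, m, Path.refl _ _ hv⟩
  | node l C D ihC ihD =>
    intro k A hv hnd
    have hvB : LevelValid (node l C D) := (levelValid_node.mp hv).2.2.2
    obtain ⟨Z₁, c, p1⟩ := ihD l C hvB (nodup_right hnd)
    have lifted : Path (2 * branches (node l C D)) (node k A (node l C D))
        (node k A (node l Z₁ (leaf c))) := p1.congrR k A hv
    have hv2 := lifted.validR
    have hnd2 : (seq (node k A (node l Z₁ (leaf c)))).Nodup := (lifted.perm.nodup_iff).mp hnd
    obtain ⟨Z, p2⟩ := pull A k l c Z₁ hv2 hnd2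
    exact ⟨Z, c, (lifted.trans p2).mono (by simp; omega)⟩

/-- Left combs. -/
inductive Comb : RTree → Prop
  | leaf (k : ℕ) : Comb (leaf k)
  | node (k c : ℕ) {A : RTree} : Comb A → Comb (node k A (leaf c))

/-- Phase 1: turn any valid tree into a left comb. -/
lemma toComb (N : ℕ) : ∀ (t : RTree), branches t ≤ N → LevelValid t → (seq t).Nodup →
    ∃ C, Path (branches t * (branches t + 1)) t C ∧ Comb C := by
  induction N with
  | zero =>
    intro t hb hv hnd
    cases t with
    | leaf k => exact ⟨_, Path.refl _ _ hv, Comb.leaf k⟩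
    | node k A B => simp at hb
  | succ N ih =>
    intro t hb hv hnd
    cases t with
    | leaf k => exact ⟨_, Path.refl _ _ hv, Comb.leaf k⟩
    | node k A B =>
      obtain ⟨Z, m, p1⟩ := rightLeaf B k A hv hnd
      have hvZ : LevelValid (node k Z (leaf m)) := p1.validR
      have hndZ : (seq (node k Z (leaf m))).Nodup := (p1.perm.nodup_iff).mp hnd
      have hbZ : branches Z + 1 = branches (node k A B) := by
        have h := p1.leafCount_eq
        simp only [leafCount_eq_branches_add_one] at h
        simp at h ⊢
        omega
      obtain ⟨C', p2, hC⟩ := ih Z (by omega) (levelValid_node.mp hvZ).2.2.1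
        (nodup_left hndZ)
      have lifted := p2.congrL k (leaf m) hvZ
      refine ⟨node k C' (leaf m), ?_, Comb.node k m hC⟩
      refine (p1.trans lifted).mono ?_
      rw [← hbZ]
      nlinarith [sq_nonneg (branches Z)]

/-- Build a left comb from a list of (branch level, right-leaf level) pairs,
read from the root down, with bottom-left leaf `x`. -/
def toTree : List (ℕ × ℕ) → ℕ → RTree
  | [], x => leaf x
  | (b, c) :: L, x => node b (toTree L x) (leaf c)

@[simp] lemma toTree_nil (x : ℕ) : toTree [] x = leaf x := rfl
@[simp] lemma toTree_cons (b c : ℕ) (L : List (ℕ × ℕ)) (x : ℕ) :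
    toTree ((b, c) :: L) x = node b (toTree L x) (leaf c) := rfl

lemma comb_toTree {C : RTree} (h : Comb C) : ∃ L x, C = toTree L x := by
  induction h with
  | leaf k => exact ⟨[], k, rfl⟩
  | node k c hA ih =>
    obtain ⟨L, x, rfl⟩ := ih
    exact ⟨(k, c) :: L, x, rfl⟩

lemma branchSeq_toTree (L : List (ℕ × ℕ)) (x : ℕ) :
    branchSeq (toTree L x) = (L.map Prod.fst).reverse := by
  induction L with
  | nil => rfl
  | cons p L ih =>
    obtain ⟨b, c⟩ := p
    simp [ih]

lemma branches_toTree (L : List (ℕ × ℕ)) (x : ℕ) : branches (toTree L x) = L.length := by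
  induction L with
  | nil => rfl
  | cons p L ih => obtain ⟨b, c⟩ := p; simp [ih]

/-- The levels contributed by a prefix of the pair list. -/
def flatRev : List (ℕ × ℕ) → List ℕ
  | [] => []
  | (b, c) :: L => flatRev L ++ [b, c]

lemma seq_toTree_append (P L : List (ℕ × ℕ)) (x : ℕ) :
    seq (toTree (P ++ L) x) = seq (toTree L x) ++ flatRev P := by
  induction P with
  | nil => simp [flatRev]
  | cons p P ih =>
    obtain ⟨b, c⟩ := p
    simp [flatRev, ih]

lemma mem_flatRev {v : ℕ} {P : List (ℕ × ℕ)} :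
    v ∈ flatRev P ↔ v ∈ P.map Prod.fst ∨ v ∈ P.map Prod.snd := by
  induction P with
  | nil => simp [flatRev]
  | cons p P ih =>
    obtain ⟨b, c⟩ := p
    simp [flatRev, ih]
    tauto

lemma lv_toTree_suffix {P L : List (ℕ × ℕ)} {x : ℕ}
    (h : LevelValid (toTree (P ++ L) x)) : LevelValid (toTree L x) := by
  induction P with
  | nil => simpa using h
  | cons p P ih =>
    obtain ⟨b, c⟩ := p
    exact ih (levelValid_node.mp h).2.2.1

lemma Path.liftPrefix (pre : List (ℕ × ℕ)) {L L' : List (ℕ × ℕ)} {x x' : ℕ} {m : ℕ}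
    (h : Path m (toTree L x) (toTree L' x'))
    (hv : LevelValid (toTree (pre ++ L) x)) :
    Path m (toTree (pre ++ L) x) (toTree (pre ++ L') x') := by
  induction pre with
  | nil => simpa using h
  | cons p pre ih =>
    obtain ⟨b, c⟩ := p
    exact (ih (levelValid_node.mp hv).2.2.1).congrL b (leaf c) hv

/-- Swap two vertically adjacent leaves of a comb (3 moves). -/
lemma swapA {b₁ c₁ b₂ c₂ : ℕ} {L : List (ℕ × ℕ)} {x : ℕ}
    (hv : LevelValid (toTree ((b₁, c₁) :: (b₂, c₂) :: L) x)) (h : b₂ < c₁) :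
    Path 3 (toTree ((b₁, c₁) :: (b₂, c₂) :: L) x) (toTree ((b₁, c₂) :: (b₂, c₁) :: L) x) := by
  set T := toTree L x with hT
  obtain ⟨hB1, hb1c1, hvin, -⟩ := levelValid_node.mp hv
  obtain ⟨h12, h1T, h1c2⟩ := below_node.mp hB1
  obtain ⟨h2T, h2c2, hvT, -⟩ := levelValid_node.mp hvin
  have h1c1 : b₁ < c₁ := by simpa using hb1c1
  have h2c2' : b₂ < c₂ := by simpa using h2c2
  have lv1 : LevelValid (node b₁ T (node b₂ (leaf c₂) (leaf c₁))) :=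
    levelValid_node.mpr ⟨h1T, below_node.mpr ⟨h12, by simpa using h1c2, by simpa using h1c1⟩,
      hvT, levelValid_node.mpr ⟨by simpa using h2c2', by simpa using h, by simp, by simp⟩⟩
  have lv2 : LevelValid (node b₁ T (node b₂ (leaf c₁) (leaf c₂))) :=
    levelValid_node.mpr ⟨h1T, below_node.mpr ⟨h12, by simpa using h1c1, by simpa using h1c2⟩,
      hvT, levelValid_node.mpr ⟨by simpa using h, by simpa using h2c2', by simp, by simp⟩⟩
  have lv3 : LevelValid (node b₁ (node b₂ T (leaf c₁)) (leaf c₂)) :=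
    levelValid_node.mpr ⟨below_node.mpr ⟨h12, h1T, by simpa using h1c1⟩, by simpa using h1c2,
      levelValid_node.mpr ⟨h2T, by simpa using h, hvT, by simp⟩, by simp⟩
  have mv1 : Move (toTree ((b₁, c₁) :: (b₂, c₂) :: L) x) (node b₁ T (node b₂ (leaf c₂) (leaf c₁))) := by
    simpa [hT] using Move.assoc b₁ b₂ T (leaf c₂) (leaf c₁)
  have mv2 : Move (node b₁ T (node b₂ (leaf c₂) (leaf c₁))) (node b₁ T (node b₂ (leaf c₁) (leaf c₂))) := by
    have := Move.interchange b₂ (leaf c₂) (leaf c₁)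
    simpa using Move.congrR b₁ T this
  have mv3 : Move (node b₁ T (node b₂ (leaf c₁) (leaf c₂))) (toTree ((b₁, c₂) :: (b₂, c₁) :: L) x) := by
    simpa [hT] using Move.assocInv b₁ b₂ T (leaf c₁) (leaf c₂)
  exact Path.cons hv mv1 (Path.cons lv1 mv2 (Path.cons lv2 mv3 (Path.refl 0 _ lv3)))

/-- Bubble the leaf `v` down the comb past `ds` leaves and insert it into the
spine just above the `(r, c₀)` node. -/
lemma bubble (ds : List ℕ) : ∀ (i v r c₀ x : ℕ) (R' : List (ℕ × ℕ)),
    LevelValid (toTree ((List.range' i (ds.length + 1)).zip (v :: ds) ++ (r, c₀) :: R') x) →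
    i + ds.length < v → v < r → v < c₀ → (∀ m ∈ seq (toTree R' x), v < m) →
    Path (3 * ds.length + 1)
      (toTree ((List.range' i (ds.length + 1)).zip (v :: ds) ++ (r, c₀) :: R') x)
      (toTree ((List.range' i (ds.length + 1)).zip (ds ++ [r]) ++ (v, c₀) :: R') x) := by
  induction ds with
  | nil =>
    intro i v r c₀ x R' hv hiv hvr hvc hvR
    have hl1 : (List.range' i (0 + 1)).zip (v :: ([] : List ℕ)) ++ (r, c₀) :: R'
        = (i, v) :: (r, c₀) :: R' := by simp
    have hl2 : (List.range' i (0 + 1)).zip (([] : List ℕ) ++ [r]) ++ (v, c₀) :: R'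
        = (i, r) :: (v, c₀) :: R' := by simp
    simp only [List.length_nil] at hv ⊢
    rw [hl1] at hv ⊢
    rw [hl2]
    have hv' : LevelValid (node i (node r (toTree R' x) (leaf c₀)) (leaf v)) := hv
    obtain ⟨hiX, hivb, hvin, -⟩ := levelValid_node.mp hv'
    obtain ⟨hir, hiR, hic⟩ := below_node.mp hiX
    obtain ⟨hrR, hrc, hvR', -⟩ := levelValid_node.mp hvin
    have lv1 : LevelValid (node i (node v (toTree R' x) (leaf c₀)) (leaf r)) :=
      levelValid_node.mpr ⟨below_node.mpr ⟨by simpa using hivb, hiR, hic⟩, by simpa using hir,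
        levelValid_node.mpr ⟨hvR, by simpa using hvc, hvR', by simp⟩, by simp⟩
    have mv : Move (node i (node r (toTree R' x) (leaf c₀)) (leaf v))
        (node i (node v (toTree R' x) (leaf c₀)) (leaf r)) := by
      simpa using Move.interchange i (node r (toTree R' x) (leaf c₀)) (leaf v)
    exact (Path.single hv lv1 mv).mono (by omega)
  | cons d ds ih =>
    intro i v r c₀ x R' hv hiv hvr hvc hvR
    have hl1 : (List.range' i ((d :: ds).length + 1)).zip (v :: d :: ds) ++ (r, c₀) :: R'
        = (i, v) :: (i + 1, d) :: ((List.range' (i + 2) ds.length).zip ds ++ (r, c₀) :: R') := by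
      simp [List.range'_succ]
    have hmid : (i, d) :: (i + 1, v) :: ((List.range' (i + 2) ds.length).zip ds ++ (r, c₀) :: R')
        = (i, d) :: ((List.range' (i + 1) (ds.length + 1)).zip (v :: ds) ++ (r, c₀) :: R') := by
      simp [List.range'_succ]
    have hl2 : (List.range' i ((d :: ds).length + 1)).zip ((d :: ds) ++ [r]) ++ (v, c₀) :: R'
        = (i, d) :: ((List.range' (i + 1) (ds.length + 1)).zip (ds ++ [r]) ++ (v, c₀) :: R') := by
      simp [List.range'_succ]
    rw [hl1] at hv ⊢
    rw [hl2]
    have p1 : Path 3 (toTree ((i, v) :: (i + 1, d) :: ((List.range' (i + 2) ds.length).zip ds ++ (r, c₀) :: R')) x)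
        (toTree ((i, d) :: (i + 1, v) :: ((List.range' (i + 2) ds.length).zip ds ++ (r, c₀) :: R')) x) :=
      swapA hv (by simp at hiv; omega)
    have hl3 : (i + 1, v) :: ((List.range' (i + 2) ds.length).zip ds ++ (r, c₀) :: R')
        = (List.range' (i + 1) (ds.length + 1)).zip (v :: ds) ++ (r, c₀) :: R' := by
      simp [List.range'_succ]
    have hv2 := p1.validR
    rw [hmid] at hv2
    have hvin : LevelValid (toTree ((List.range' (i + 1) (ds.length + 1)).zip (v :: ds) ++ (r, c₀) :: R') x) :=
      (levelValid_node.mp hv2).2.2.1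
    have p2 := ih (i + 1) v r c₀ x R' hvin (by simp at hiv ⊢; omega) hvr hvc hvR
    have p2' := p2.congrL i (leaf d) hv2
    rw [hl3] at p1
    have ptot := p1.trans p2'
    exact ptot.mono (by simp; omega)

/-- Cost bound for the sorting phase. -/
def B2 : ℕ → ℕ → ℕ
  | _, 0 => 0
  | l, m + 1 => (3 * l - 2) + B2 (l + 1) m

@[simp] lemma B2_zero (l : ℕ) : B2 l 0 = 0 := rfl
lemma B2_succ (l m : ℕ) : B2 l (m + 1) = (3 * l - 2) + B2 (l + 1) m := rfl

/-- Phase 2: sort a comb so that its spine levels become `0, 1, …`. -/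
lemma stages (R : List (ℕ × ℕ)) : ∀ (cs : List ℕ) (x : ℕ),
    LevelValid (toTree ((List.range cs.length).zip cs ++ R) x) →
    (seq (toTree ((List.range cs.length).zip cs ++ R) x)).Nodup →
    (∀ v, v < cs.length + R.length → v ∈ seq (toTree ((List.range cs.length).zip cs ++ R) x)) →
    ∃ cs' x', cs'.length = cs.length + R.length ∧
      Path (B2 cs.length R.length)
        (toTree ((List.range cs.length).zip cs ++ R) x)
        (toTree ((List.range cs'.length).zip cs') x') := by
  induction R with
  | nil =>
    intro cs x hv hnd hvals
    refine ⟨cs, x, by simp, ?_⟩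
    simp only [List.append_nil] at hv ⊢
    exact Path.refl _ _ hv
  | cons p R' ih =>
    obtain ⟨r, c₀⟩ := p
    intro cs x hv hnd hvals
    have hzl : ((List.range cs.length).zip cs).length = cs.length := by simp
    have hmapfst : ((List.range cs.length).zip cs).map Prod.fst = List.range cs.length :=
      List.map_fst_zip (by simp)
    have hmapsnd : ((List.range cs.length).zip cs).map Prod.snd = cs :=
      List.map_snd_zip (by simp)
    have hseq := seq_toTree_append ((List.range cs.length).zip cs) ((r, c₀) :: R') x
    have hflat : ∀ v, v ∈ flatRev ((List.range cs.length).zip cs) ↔ v < cs.length ∨ v ∈ cs := by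
      intro v
      rw [mem_flatRev, hmapfst, hmapsnd, List.mem_range]
    have hdisj : ∀ m ∈ seq (toTree ((r, c₀) :: R') x),
        ¬ m ∈ flatRev ((List.range cs.length).zip cs) := by
      have h := hnd
      rw [hseq, List.nodup_append'] at h
      exact fun m hm => h.2.2 hm
    have hbig : ∀ m ∈ seq (toTree ((r, c₀) :: R') x), m ∉ cs ∧ cs.length ≤ m := by
      intro m hm
      have := hdisj m hm
      rw [hflat] at this
      push_neg at this
      exact ⟨this.2, by omega⟩
    have hvR : LevelValid (toTree ((r, c₀) :: R') x) := lv_toTree_suffix hv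
    have hrmin : ∀ m ∈ seq (toTree ((r, c₀) :: R') x), r ≤ m := by
      have := hvR.root_le
      simpa using this
    by_cases hin : cs.length ∈ cs
    · -- the next level sits among the comb-top leaves: bubble it down
      obtain ⟨pre, ds, hcs⟩ := List.append_of_mem hin
      have hlen : pre.length + 1 + ds.length = cs.length := by
        conv_rhs => rw [hcs]
        simp
        omega
      -- split the spine list
      have hr1 : List.range cs.length
          = List.range' 0 pre.length ++ List.range' pre.length (ds.length + 1) := by
        rw [List.range_eq_range']
        have h := List.range'_append (s := 0) (m := pre.length) (n := ds.length + 1) (step := 1)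
        simp only [Nat.one_mul, Nat.zero_add] at h
        rw [show cs.length = ds.length + 1 + pre.length from by omega]
        rw [Nat.add_comm pre.length] at h
        exact h.symm
      have hsplit : (List.range cs.length).zip cs
          = (List.range' 0 pre.length).zip pre
            ++ (List.range' pre.length (ds.length + 1)).zip (cs.length :: ds) := by
        conv_lhs => rw [hr1, hcs]
        exact List.zip_append (by simp)
      have hlist1 : (List.range cs.length).zip cs ++ (r, c₀) :: R'
          = (List.range' 0 pre.length).zip pre
            ++ ((List.range' pre.length (ds.length + 1)).zip (cs.length :: ds) ++ (r, c₀) :: R') := by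
        rw [hsplit, List.append_assoc]
      -- facts for bubble
      have hlr : cs.length < r := by
        have h1 := (hbig r (by simp)).1
        have h2 := (hbig r (by simp)).2
        have : r ≠ cs.length := fun h => h1 (h ▸ hin)
        omega
      have hlc : cs.length < c₀ := by
        have h1 := (hbig c₀ (by simp)).1
        have h2 := (hbig c₀ (by simp)).2
        have : c₀ ≠ cs.length := fun h => h1 (h ▸ hin)
        omega
      have hlR' : ∀ m ∈ seq (toTree R' x), cs.length < m := by
        intro m hm
        have hm' : m ∈ seq (toTree ((r, c₀) :: R') x) := by simp [hm]
        have h1 := (hbig m hm').1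
        have h2 := (hbig m hm').2
        have : m ≠ cs.length := fun h => h1 (h ▸ hin)
        omega
      have hvin : LevelValid (toTree
          ((List.range' pre.length (ds.length + 1)).zip (cs.length :: ds) ++ (r, c₀) :: R') x) := by
        have := hv
        rw [hlist1] at this
        exact lv_toTree_suffix this
      have pbub := bubble ds pre.length cs.length r c₀ x R' hvin (by omega) hlr hlc hlR'
      have hvfull : LevelValid (toTree ((List.range' 0 pre.length).zip pre
          ++ ((List.range' pre.length (ds.length + 1)).zip (cs.length :: ds) ++ (r, c₀) :: R')) x) := by
        rw [← hlist1]; exact hv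
      have plift := pbub.liftPrefix ((List.range' 0 pre.length).zip pre) hvfull
      -- identify the final list
      set cs₂ : List ℕ := (pre ++ ds ++ [r]) ++ [c₀] with hcs₂
      have hlen₂ : cs₂.length = cs.length + 1 := by
        rw [hcs₂]; simp; omega
      have hlist2 : (List.range cs₂.length).zip cs₂ ++ R'
          = (List.range' 0 pre.length).zip pre
            ++ ((List.range' pre.length (ds.length + 1)).zip (ds ++ [r]) ++ (cs.length, c₀) :: R') := by
        rw [hlen₂, List.range_succ, hcs₂, List.zip_append (by simp; omega), hr1,
          List.append_assoc pre ds [r], List.zip_append (by simp)]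
        simp [List.append_assoc]
      rw [← hlist2] at plift
      -- recurse
      have hvend : LevelValid (toTree ((List.range cs₂.length).zip cs₂ ++ R') x) := plift.validR
      have hpermfull : (seq (toTree ((List.range cs.length).zip cs ++ (r, c₀) :: R') x)).Perm
          (seq (toTree ((List.range cs₂.length).zip cs₂ ++ R') x)) := by
        have := plift.perm
        rw [← hlist1] at this
        exact this
      have hnd₂ := (hpermfull.nodup_iff).mp hnd
      have hvals₂ : ∀ v, v < cs₂.length + R'.length
          → v ∈ seq (toTree ((List.range cs₂.length).zip cs₂ ++ R') x) := by
        intro v hvlt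
        have : v ∈ seq (toTree ((List.range cs.length).zip cs ++ (r, c₀) :: R') x) := by
          apply hvals
          simp only [List.length_cons]
          omega
        exact hpermfull.subset this
      obtain ⟨cs', x', hlen', p'⟩ := ih cs₂ x hvend hnd₂ hvals₂
      refine ⟨cs', x', by rw [hlen', hlen₂]; simp; omega, ?_⟩
      have ptot := plift.trans p'
      have hsrc : Path ((3 * ds.length + 1) + B2 cs₂.length R'.length)
          (toTree ((List.range cs.length).zip cs ++ (r, c₀) :: R') x)
          (toTree ((List.range cs'.length).zip cs') x') := by
        rw [hlist1]
        exact ptot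
      refine hsrc.mono ?_
      simp only [List.length_cons]
      rw [B2_succ, hlen₂]
      have h3 : 3 * ds.length + 1 ≤ 3 * cs.length - 2 := by omega
      omega
    · -- the next level is the root of the unsorted part
      have hlmem : cs.length ∈ seq (toTree ((List.range cs.length).zip cs ++ (r, c₀) :: R') x) := by
        apply hvals
        simp only [List.length_cons]
        omega
      have hlin : cs.length ∈ seq (toTree ((r, c₀) :: R') x) := by
        rw [hseq, List.mem_append] at hlmem
        rcases hlmem with h | h
        · exact h
        · rw [hflat] at h
          rcases h with h | h
          · omega
          · exact absurd h hin
      have hrl : r = cs.length := by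
        have h1 := hrmin cs.length hlin
        have h2 := (hbig r (by simp)).2
        omega
      subst hrl
      have hlist1 : (List.range cs.length).zip cs ++ (cs.length, c₀) :: R'
          = (List.range (cs ++ [c₀]).length).zip (cs ++ [c₀]) ++ R' := by
        have h1 : (cs ++ [c₀]).length = cs.length + 1 := by simp
        rw [h1, List.range_succ, List.zip_append (by simp)]
        simp [List.append_assoc]
      rw [hlist1] at hv hnd hvals ⊢
      have hvals₂ : ∀ v, v < (cs ++ [c₀]).length + R'.length
          → v ∈ seq (toTree ((List.range (cs ++ [c₀]).length).zip (cs ++ [c₀]) ++ R') x) := by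
        intro v hvlt
        apply hvals
        simp only [List.length_cons, List.length_append, List.length_singleton, List.length_nil] at hvlt ⊢
        omega
      obtain ⟨cs', x', hlen', p'⟩ := ih (cs ++ [c₀]) x hv hnd hvals₂
      refine ⟨cs', x', by rw [hlen']; simp; omega, ?_⟩
      refine p'.mono ?_
      have h1 : (cs ++ [c₀]).length = cs.length + 1 := by simp
      have h2 : ((cs.length, c₀) :: R').length = R'.length + 1 := by simp
      rw [h1, h2, B2_succ]
      omega

lemma b2_closed : ∀ (m l : ℕ), 1 ≤ l → 2 * B2 l m + 7 * m = 6 * l * m + 3 * m * m := by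
  intro m
  induction m with
  | zero => intro l hl; simp
  | succ m ih =>
    intro l hl
    obtain ⟨l', rfl⟩ : ∃ l', l = l' + 1 := ⟨l - 1, by omega⟩
    have E := ih (l' + 1 + 1) (by omega)
    rw [B2_succ, show 3 * (l' + 1) - 2 = 3 * l' + 1 from by omega]
    nlinarith [E]

lemma leafCount_pos (t : RTree) : 1 ≤ leafCount t := by
  rw [leafCount_eq_branches_add_one]; omega

lemma leafCount_eq_one {t : RTree} (h : leafCount t = 1) : ∃ a, t = leaf a := by
  cases t with
  | leaf a => exact ⟨a, rfl⟩
  | node k A B =>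
    have h1 := leafCount_pos A
    have h2 := leafCount_pos B
    simp at h
    omega

lemma path_chain {n : ℕ} : ∀ {m : ℕ} {s u : RTree}, Path m s u → IsRB n s →
    ∃ L : List RTree, List.Chain (MoveRB n) s L ∧
      (s :: L).getLast (List.cons_ne_nil s L) = u ∧ L.length ≤ m := by
  intro m s u h
  induction h with
  | refl m t h => intro _; exact ⟨[], List.Chain.nil, rfl, by simp⟩
  | @cons m s u t hLV hm hp ih =>
    intro hs
    have hu : IsRB n u := ⟨by rw [← hm.leafCount_eq]; exact hs.1,
      (hm.perm.symm).trans hs.2.1, hp.validL⟩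
    obtain ⟨L, hc, hlast, hlen⟩ := ih hu
    refine ⟨u :: L, List.Chain.cons ⟨hm, hs, hu⟩ hc, ?_, by simp; omega⟩
    rw [List.getLast_cons (List.cons_ne_nil u L)]
    exact hlast

end RTree

theorem left_reduction' (n : ℕ) (t : RTree) (ht : RTree.IsRB n t) :
    ∃ L : List RTree, List.Chain (RTree.MoveRB n) t L ∧
      LeftReduced n ((t :: L).getLast (List.cons_ne_nil t L)) ∧
      L.length ≤ (5 * n - 1) * (n - 2) / 2 := by
  classical
  open RTree in
  obtain ⟨hcount, hperm, hLV⟩ := ht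
  rcases Nat.lt_or_ge n 3 with hn3 | hn3
  · -- small cases n ≤ 2 : the tree is already left-reduced
    have hpos := RTree.leafCount_pos t
    interval_cases n
    · omega
    · obtain ⟨a, rfl⟩ := RTree.leafCount_eq_one hcount
      exact ⟨[], List.Chain.nil, ⟨⟨hcount, hperm, hLV⟩, by simp⟩, by simp⟩
    · -- n = 2
      cases t with
      | leaf a => simp at hcount
      | node k A B =>
        have h1 := RTree.leafCount_pos A
        have h2 := RTree.leafCount_pos B
        have hA1 : leafCount A = 1 := by simp at hcount; omega
        have hB1 : leafCount B = 1 := by simp at hcount; omega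
        obtain ⟨a, rfl⟩ := RTree.leafCount_eq_one hA1
        obtain ⟨b, rfl⟩ := RTree.leafCount_eq_one hB1
        have hka : k < a := by
          have := (levelValid_node.mp hLV).1
          simpa using this
        have hkb : k < b := by
          have := (levelValid_node.mp hLV).2.1
          simpa using this
        have h0 : (0 : ℕ) ∈ seq (node k (leaf a) (leaf b)) := by
          apply hperm.symm.subset
          simp [List.mem_range]
        have hk0 : k = 0 := by
          simp at h0
          omega
        refine ⟨[], List.Chain.nil, ⟨⟨hcount, hperm, hLV⟩, ?_⟩, by simp⟩
        simp [hk0, List.range_succ]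
  · -- main case n ≥ 3
    have hnd : (seq t).Nodup := hperm.nodup_iff.mpr List.nodup_range
    have hbr : branches t + 1 = n := by
      rw [← RTree.leafCount_eq_branches_add_one t]; exact hcount
    obtain ⟨C, p1, hC⟩ := RTree.toComb (branches t) t le_rfl hLV hnd
    obtain ⟨L₀, x₀, rfl⟩ := RTree.comb_toTree hC
    have hlen₀ : L₀.length = n - 1 := by
      have h := p1.leafCount_eq
      rw [RTree.leafCount_eq_branches_add_one, RTree.leafCount_eq_branches_add_one,
        RTree.branches_toTree] at h
      omega
    have hCperm : (seq (toTree L₀ x₀)).Perm (List.range (2 * n - 1)) :=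
      (p1.perm.symm).trans hperm
    have he : (List.range (([] : List ℕ)).length).zip ([] : List ℕ) ++ L₀ = L₀ := by simp
    have hv₀ : LevelValid (toTree ((List.range (([] : List ℕ)).length).zip ([] : List ℕ) ++ L₀) x₀) := by
      rw [he]; exact p1.validR
    have hnd₀ : (seq (toTree ((List.range (([] : List ℕ)).length).zip ([] : List ℕ) ++ L₀) x₀)).Nodup := by
      rw [he]; exact (p1.perm.nodup_iff).mp hnd
    have hvals₀ : ∀ v, v < ([] : List ℕ).length + L₀.length →
        v ∈ seq (toTree ((List.range (([] : List ℕ)).length).zip ([] : List ℕ) ++ L₀) x₀) := by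
      intro v hvlt
      rw [he]
      apply hCperm.symm.subset
      simp only [List.length_nil, Nat.zero_add, hlen₀] at hvlt
      simp [List.mem_range]
      omega
    obtain ⟨cs', x', hlen', p2⟩ := RTree.stages L₀ [] x₀ hv₀ hnd₀ hvals₀
    rw [he] at p2
    have ptot := p1.trans p2
    set T' := toTree ((List.range cs'.length).zip cs') x' with hT'
    have hlen'' : cs'.length = n - 1 := by
      rw [hlen', hlen₀]; simp
    have hRB : IsRB n T' :=
      ⟨by rw [← ptot.leafCount_eq]; exact hcount, (ptot.perm.symm).trans hperm, ptot.validR⟩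
    have hbs : branchSeq T' = (List.range (n - 1)).reverse := by
      rw [hT', RTree.branchSeq_toTree, List.map_fst_zip (by simp), hlen'']
    obtain ⟨L, hchain, hlast, hlenL⟩ := RTree.path_chain ptot ⟨hcount, hperm, hLV⟩
    refine ⟨L, hchain, ?_, ?_⟩
    · rw [hlast]; exact ⟨hRB, hbs⟩
    · -- arithmetic
      refine le_trans hlenL ?_
      rw [Nat.le_div_iff_mul_le (by norm_num)]
      obtain ⟨m, rfl⟩ : ∃ m, n = m + 3 := ⟨n - 3, by omega⟩
      have hb2 : B2 ([] : List ℕ).length L₀.length = B2 1 (m + 1) := by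
        simp only [List.length_nil, hlen₀]
        rw [show m + 3 - 1 = (m + 1) + 1 from by omega, B2_succ]
        norm_num
      rw [hb2]
      have hcl := RTree.b2_closed (m + 1) 1 le_rfl
      rw [show branches t = m + 2 from by omega,
        show 5 * (m + 3) - 1 = 5 * m + 14 from by omega,
        show m + 3 - 2 = m + 1 from by omega]
      nlinarith [hcl]


/-- The Left Reduction algorithm: every resolved binary tree of length `n`
can be brought into left-reduced form by a sequence of at most
`(5n-1)(n-2)/2` primitive arrows; in particular `O(n²)` arrows suffice. -/
theorem left_reduction (n : ℕ) (t : RTree) (ht : RTree.IsRB n t) :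
    ∃ L : List RTree, List.Chain (RTree.MoveRB n) t L ∧
      LeftReduced n ((t :: L).getLast (List.cons_ne_nil t L)) ∧
      L.length ≤ (5 * n - 1) * (n - 2) / 2 := by
  exact left_reduction' n t ht
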